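/- The Bernstein homomorphism of QSym itself coincides with the flipped internal comultiplication: β_QSym = τ ∘ Δ_P, where Δ_P is the internal comultiplication of QSym defined on the monomial basis by Δ_P(M_α) = Σ_A M_{row A} ⊗ M_{column A}, the sum ranging over all reduced matrices A of nonnegative integers with (read A)^red = α, and τ is the twist map f ⊗ g ↦ g ⊗ f. Equivalently, for every composition γ: Σ_α ξ_α(M_γ) ⊗ M_α = Σ_{A reduced, (read A)^red = γ} M_{column A} ⊗ M_{row A}, where ξ_α = m^{(k−1)} ∘ π_α ∘ Δ^{(k−1)} for α = (a₁,…,a_k). -/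

import Mathlib

open TensorProduct

/-- The underlying `k`-module of the quasisymmetric functions: the free `k`-module with basis
indexed by finite lists of natural numbers (the monomial quasisymmetric functions `M_α` for
compositions `α`, i.e. lists with positive entries, form the monomial basis). -/
abbrev QSymM (k : Type*) [CommRing k] : Type _ := List ℕ →₀ k

/-- A composition: a finite list of positive integers. -/
def IsComposition (α : List ℕ) : Prop := ∀ a ∈ α, 0 < a

/-- The monomial quasisymmetric function `M_α`, as a basis vector. -/
noncomputable def Mq (k : Type*) [CommRing k] (α : List ℕ) : QSymM k := Finsupp.single α 1

/-- The comultiplication of `QSym` (deconcatenation coproduct):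
`Δ (M_β) = ∑ i, M_{(b₁,…,b_i)} ⊗ M_{(b_{i+1},…,b_ℓ)}`. -/
noncomputable def comulQ (k : Type*) [CommRing k] : QSymM k →ₗ[k] QSymM k ⊗[k] QSymM k :=
  Finsupp.lsum k fun β => LinearMap.toSpanSingleton k _
    (∑ i ∈ Finset.range (β.length + 1), Mq k (β.take i) ⊗ₜ[k] Mq k (β.drop i))

/-- The counit of `QSym`: `ε (M_α) = 1` if `α = ()` and `0` otherwise. -/
noncomputable def counitQ (k : Type*) [CommRing k] : QSymM k →ₗ[k] k :=
  Finsupp.lsum k fun β => if β = [] then LinearMap.id else 0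

/-- The algebra homomorphism `ε_P : QSym → k`, `f ↦ f (1, 0, 0, …)`:
it sends `M_α ↦ 1` if `α` has length `≤ 1`, and `M_α ↦ 0` otherwise. -/
noncomputable def epsP (k : Type*) [CommRing k] : QSymM k →ₗ[k] k :=
  Finsupp.lsum k fun β => if β.length ≤ 1 then LinearMap.id else 0

/-- The projection of `QSym` onto its homogeneous component of degree `n`. -/
noncomputable def piQ (k : Type*) [CommRing k] (n : ℕ) : QSymM k →ₗ[k] QSymM k :=
  Finsupp.lsum k fun β => if β.sum = n then LinearMap.toSpanSingleton k _ (Mq k β) else 0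

section QSymProduct

variable (k : Type*) [CommRing k]

/-- Prepending an entry to the indexing composition, linearly extended. -/
noncomputable def mapConsQ (z : ℕ) : QSymM k →ₗ[k] QSymM k :=
  Finsupp.lmapDomain k k (fun l => z :: l)

/-- The quasi-shuffle (overlapping shuffle) product of two monomial quasisymmetric functions,
defined by the usual recursion; this is the product of `QSym` on the monomial basis. -/
noncomputable def qshuffle : List ℕ → List ℕ → QSymM k
  | [], b => Finsupp.single b 1
  | a :: as, [] => Finsupp.single (a :: as) 1
  | x :: xs, y :: ys =>
      mapConsQ k x (qshuffle xs (y :: ys)) + mapConsQ k y (qshuffle (x :: xs) ys) +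
        mapConsQ k (x + y) (qshuffle xs ys)
  termination_by a b => a.length + b.length

/-- The multiplication of `QSym`, as a linear map on the tensor square. -/
noncomputable def mulQ : QSymM k ⊗[k] QSymM k →ₗ[k] QSymM k :=
  TensorProduct.lift
    (Finsupp.lsum k fun α => LinearMap.toSpanSingleton k (QSymM k →ₗ[k] QSymM k)
      (Finsupp.lsum k fun β => LinearMap.toSpanSingleton k (QSymM k) (qshuffle k α β)))

/-- The unit of `QSym`. -/
noncomputable def unitQ : k →ₗ[k] QSymM k :=
  LinearMap.toSpanSingleton k (QSymM k) (Mq k [])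

end QSymProduct

section

variable (k : Type*) [CommRing k]

/-- `ξ_α = m^{(m-1)} ∘ π_α ∘ Δ^{(m-1)} : QSym → QSym` for a composition `α = (a₁, …, a_m)`
(written in its standard recursive form), used to define the Bernstein homomorphism
`β_QSym (f) = ∑_α ξ_α (f) ⊗ M_α` of `QSym` itself. -/
noncomputable def xiQ : List ℕ → (QSymM k →ₗ[k] QSymM k)
  | [] => unitQ k ∘ₗ counitQ k
  | a :: t => mulQ k ∘ₗ TensorProduct.map (piQ k a) (xiQ t) ∘ₗ comulQ k

end

/-- `w^red`: the composition obtained from a tuple of nonnegative integers by removing all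
zero entries. -/
def redList (l : List ℕ) : List ℕ := l.filter (· ≠ 0)

/-- The list of row sums of a matrix of nonnegative integers. -/
def rowSums {u v : ℕ} (A : Matrix (Fin u) (Fin v) ℕ) : List ℕ :=
  List.ofFn fun i => ∑ j, A i j

/-- The list of column sums of a matrix of nonnegative integers. -/
def colSums {u v : ℕ} (A : Matrix (Fin u) (Fin v) ℕ) : List ℕ :=
  List.ofFn fun j => ∑ i, A i j

/-- The row-by-row reading word of a matrix of nonnegative integers. -/
def readM {u v : ℕ} (A : Matrix (Fin u) (Fin v) ℕ) : List ℕ :=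
  (List.ofFn fun i => List.ofFn (A i)).flatten

/-- A matrix of nonnegative integers is reduced if no row and no column is the zero vector. -/
def MatReduced {u v : ℕ} (A : Matrix (Fin u) (Fin v) ℕ) : Prop :=
  (∀ i, ∃ j, A i j ≠ 0) ∧ (∀ j, ∃ i, A i j ≠ 0)

/-!
Both sides satisfy the same recursion in `γ`. Expanding `ξ_{(a, t)} = m ∘ (π_a ⊗ ξ_t) ∘ Δ` on
`M_γ` gives `β(M_γ) = ∑ (M_δ · x) ⊗ M_{(|δ|, t)}` over the nonempty prefixes `δ` of `γ = δ ε`,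
where `β(M_ε) = ∑ x ⊗ M_t`. On the matrix side, the first row of a reduced matrix `A` with
`(read A)^red = γ` reads such a prefix `δ`; deleting it together with the columns that become
zero leaves a reduced matrix `C` reading `ε`. The ways of putting a first row reading `δ` back on
top of `C` are exactly the terms of the quasi-shuffle product `M_δ M_{column C}`, and
`row A = (|δ|, row C)`.
-/

open Finset

section MonomialBasis

variable (k : Type*) [CommRing k]

lemma piQ_Mq (n : ℕ) (β : List ℕ) : piQ k n (Mq k β) = if β.sum = n then Mq k β else 0 := by
  rw [piQ, Mq, Finsupp.lsum_single]
  split_ifs <;> simp [Mq]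

lemma comulQ_Mq (β : List ℕ) :
    comulQ k (Mq k β) =
      ∑ i ∈ range (β.length + 1), Mq k (β.take i) ⊗ₜ[k] Mq k (β.drop i) := by
  rw [Mq, comulQ, Finsupp.lsum_single, LinearMap.toSpanSingleton_apply_one]

lemma counitQ_Mq (β : List ℕ) : counitQ k (Mq k β) = if β = [] then 1 else 0 := by
  rw [Mq, counitQ, Finsupp.lsum_single]
  split_ifs <;> rfl

lemma mulQ_Mq (α β : List ℕ) : mulQ k (Mq k α ⊗ₜ[k] Mq k β) = qshuffle k α β := by
  simp only [mulQ, TensorProduct.lift.tmul, Mq, Finsupp.lsum_single,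
    LinearMap.toSpanSingleton_apply_one]

lemma mapConsQ_Mq (z : ℕ) (l : List ℕ) : mapConsQ k z (Mq k l) = Mq k (z :: l) := by
  simp [mapConsQ, Mq, Finsupp.mapDomain_single]

lemma xiQ_nil_Mq (γ : List ℕ) : xiQ k [] (Mq k γ) = if γ = [] then Mq k [] else 0 := by
  rw [xiQ, LinearMap.comp_apply, counitQ_Mq, unitQ]
  split_ifs <;> simp

lemma xiQ_cons_Mq (a : ℕ) (t γ : List ℕ) :
    xiQ k (a :: t) (Mq k γ) = ∑ i ∈ range (γ.length + 1),
      if (γ.take i).sum = a then mulQ k (Mq k (γ.take i) ⊗ₜ[k] xiQ k t (Mq k (γ.drop i)))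
      else 0 := by
  simp only [xiQ, LinearMap.comp_apply, comulQ_Mq, map_sum, TensorProduct.map_tmul, piQ_Mq]
  refine sum_congr rfl fun i _ => ?_
  split_ifs <;> simp

lemma xiQ_Mq_eq_zero_of_sum_ne : ∀ {α γ : List ℕ}, α.sum ≠ γ.sum → xiQ k α (Mq k γ) = 0
  | [], γ, h => by
    rw [xiQ_nil_Mq, if_neg]
    rintro rfl
    exact h rfl
  | a :: t, γ, h => by
    rw [xiQ_cons_Mq]
    refine sum_eq_zero fun i _ => ?_
    split_ifs with hi
    · have := List.sum_take_add_sum_drop γ i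
      rw [xiQ_Mq_eq_zero_of_sum_ne (α := t) (γ := γ.drop i) (by simp at h; omega),
        TensorProduct.tmul_zero, map_zero]
    · rfl

end MonomialBasis

lemma IsComposition.take {γ : List ℕ} (hγ : IsComposition γ) (n : ℕ) :
    IsComposition (γ.take n) :=
  fun a ha => hγ a (List.mem_of_mem_take ha)

lemma IsComposition.drop {γ : List ℕ} (hγ : IsComposition γ) (n : ℕ) :
    IsComposition (γ.drop n) :=
  fun a ha => hγ a (List.mem_of_mem_drop ha)

def compositions : ℕ → Finset (List ℕ)
  | 0 => {[]}
  | n + 1 => (range (n + 1)).biUnion fun j => (compositions (n - j)).image ((j + 1) :: ·)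

lemma mem_compositions : ∀ {α : List ℕ} {n : ℕ}, α ∈ compositions n ↔ IsComposition α ∧ α.sum = n
  | [], 0 => by simp [compositions, IsComposition]
  | [], n + 1 => by simp [compositions]
  | a :: t, 0 => by simp [compositions, IsComposition]; omega
  | a :: t, n + 1 => by
    simp only [compositions, mem_biUnion, mem_range, mem_image, List.cons.injEq,
      IsComposition, List.forall_mem_cons, List.sum_cons]
    constructor
    · rintro ⟨j, hj, t, ht, rfl, rfl⟩
      obtain ⟨ht, hsum⟩ := mem_compositions.1 ht
      exact ⟨⟨j.succ_pos, ht⟩, by omega⟩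
    · rintro ⟨⟨ha, ht⟩, hsum⟩
      exact ⟨a - 1, by omega, t, mem_compositions.2 ⟨ht, by omega⟩, by omega, rfl⟩

lemma sum_compositions_succ {M : Type*} [AddCommMonoid M] (n : ℕ) (f : List ℕ → M) :
    ∑ α ∈ compositions (n + 1), f α =
      ∑ j ∈ range (n + 1), ∑ t ∈ compositions (n - j), f ((j + 1) :: t) := by
  rw [compositions, sum_biUnion]
  · exact sum_congr rfl fun j _ => sum_image fun _ _ _ _ h => (List.cons.inj h).2
  · intro j _ j' _ hne
    simp only [Function.onFun, disjoint_left, mem_image]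
    rintro _ ⟨t, -, rfl⟩ ⟨t', -, h⟩
    exact hne (by simpa using (List.cons.inj h).1.symm)

section Bernstein

variable (k : Type*) [CommRing k]

/-- Both sides of the theorem recurse through this operator, splitting off the first row of the
matrix, resp. the first part of `α`. -/
noncomputable def mulTmulCons (δ : List ℕ) : QSymM k ⊗[k] QSymM k →ₗ[k] QSymM k ⊗[k] QSymM k :=
  TensorProduct.map (mulQ k ∘ₗ TensorProduct.mk k _ _ (Mq k δ)) (mapConsQ k δ.sum)

/-- `β_QSym (M_γ)`, the sum over compositions `α` cut down to those of `|γ|`. -/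
noncomputable def betaQ (γ : List ℕ) : QSymM k ⊗[k] QSymM k :=
  ∑ α ∈ compositions γ.sum, xiQ k α (Mq k γ) ⊗ₜ[k] Mq k α

lemma finsum_xiQ_tmul_eq_betaQ (γ : List ℕ) :
    ∑ᶠ α ∈ {α : List ℕ | IsComposition α}, xiQ k α (Mq k γ) ⊗ₜ[k] Mq k α = betaQ k γ := by
  refine finsum_mem_eq_sum_of_inter_support_eq _ (Set.ext fun α => ?_)
  simp only [Set.mem_inter_iff, Set.mem_ofPred_eq, Function.mem_support, mem_coe,
    mem_compositions, and_assoc, and_congr_right_iff]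
  intro _
  refine ⟨fun hne => ⟨by_contra fun h => hne ?_, hne⟩, fun h => h.2⟩
  rw [xiQ_Mq_eq_zero_of_sum_ne k h, TensorProduct.zero_tmul]

lemma betaQ_nil : betaQ k [] = Mq k [] ⊗ₜ[k] Mq k [] := by
  simp [betaQ, compositions, xiQ_nil_Mq]

lemma xiQ_cons_Mq_tmul {γ : List ℕ} (a : ℕ) (t : List ℕ) :
    xiQ k ((a + 1) :: t) (Mq k γ) ⊗ₜ[k] Mq k ((a + 1) :: t) =
      ∑ j ∈ range γ.length, if (γ.take (j + 1)).sum = a + 1 then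
        mulTmulCons k (γ.take (j + 1)) (xiQ k t (Mq k (γ.drop (j + 1))) ⊗ₜ[k] Mq k t) else 0 := by
  rw [xiQ_cons_Mq, sum_range_succ', List.take_zero, List.sum_nil, if_neg (by omega), add_zero,
    TensorProduct.sum_tmul]
  refine sum_congr rfl fun j _ => ?_
  split_ifs with h
  · rw [mulTmulCons, TensorProduct.map_tmul, LinearMap.comp_apply, TensorProduct.mk_apply,
      mapConsQ_Mq, h]
  · exact TensorProduct.zero_tmul _ _

lemma betaQ_eq_sum {γ : List ℕ} (hγ : IsComposition γ) (hne : γ ≠ []) :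
    betaQ k γ =
      ∑ j ∈ range γ.length, mulTmulCons k (γ.take (j + 1)) (betaQ k (γ.drop (j + 1))) := by
  obtain ⟨g, gs, rfl⟩ := List.exists_cons_of_ne_nil hne
  obtain ⟨n, hn⟩ : ∃ n, (g :: gs).sum = n + 1 :=
    ⟨(g :: gs).sum - 1, by have := hγ g List.mem_cons_self; simp; omega⟩
  have hfirst : ∀ j, 1 ≤ ((g :: gs).take (j + 1)).sum := fun j => by
    have := hγ g List.mem_cons_self
    simp only [List.take_succ_cons, List.sum_cons]
    omega
  have hsplit : ∀ j, ((g :: gs).take (j + 1)).sum + ((g :: gs).drop (j + 1)).sum = n + 1 :=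
    fun j => by rw [List.sum_take_add_sum_drop, hn]
  rw [betaQ, hn, sum_compositions_succ]
  simp_rw [xiQ_cons_Mq_tmul]
  rw [sum_congr rfl fun a _ => sum_comm, sum_comm]
  refine sum_congr rfl fun j _ => ?_
  simp only [sum_ite_irrel, sum_const_zero]
  rw [sum_eq_single_of_mem (((g :: gs).take (j + 1)).sum - 1)
      (mem_range.2 (by have := hsplit j; omega)) fun a _ ha => if_neg (by omega),
    if_pos (by have := hfirst j; omega), betaQ, map_sum]
  have hrest : n - (((g :: gs).take (j + 1)).sum - 1) = ((g :: gs).drop (j + 1)).sum := by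
    have := hsplit j; have := hfirst j; omega
  rw [hrest]

end Bernstein

lemma sum_redList (l : List ℕ) : (redList l).sum = l.sum := by
  induction l with
  | nil => rfl
  | cons a l ih => by_cases ha : a = 0 <;> simp_all [redList]

/-- A matrix of nonnegative integers with `u` rows, stored as its list of columns. -/
abbrev ColMat (u : ℕ) : Type := List (Fin u → ℕ)

namespace ColMat

variable {u : ℕ}

def colSums (L : ColMat u) : List ℕ := L.map fun c => ∑ i, c i

def rowSums (L : ColMat u) : List ℕ := List.ofFn fun i => (L.map (· i)).sum

def redRead (L : ColMat u) : List ℕ := (List.ofFn fun i => redList (L.map (· i))).flatten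

def IsReduced (L : ColMat u) : Prop := (∀ c ∈ L, c ≠ 0) ∧ ∀ i, ∃ c ∈ L, c i ≠ 0

lemma cons_eq_zero_iff {x : ℕ} {c : Fin u → ℕ} :
    (Fin.cons x c : Fin (u + 1) → ℕ) = 0 ↔ x = 0 ∧ c = 0 :=
  Matrix.cons_eq_zero_iff

lemma rowSums_succ (L : ColMat (u + 1)) :
    rowSums L = (L.map (· 0)).sum :: rowSums (L.map Fin.tail) := by
  simp [rowSums, List.ofFn_succ, Fin.tail, Function.comp_def]

lemma redRead_succ (L : ColMat (u + 1)) :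
    redRead L = redList (L.map (· 0)) ++ redRead (L.map Fin.tail) := by
  simp [redRead, List.ofFn_succ, Fin.tail, Function.comp_def]

lemma redList_map_filter_ne_zero {f : (Fin u → ℕ) → ℕ} (hf : f 0 = 0) (L : ColMat u) :
    redList ((L.filter (· ≠ 0)).map f) = redList (L.map f) := by
  induction L with
  | nil => rfl
  | cons c L ih => by_cases hc : c = 0 <;> simp_all [redList, List.filter_cons]

lemma rowSums_filter_ne_zero (L : ColMat u) : rowSums (L.filter (· ≠ 0)) = rowSums L := by
  simp only [rowSums]
  congr; funext i
  rw [← sum_redList, redList_map_filter_ne_zero (f := (· i)) rfl, sum_redList]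

lemma redRead_filter_ne_zero (L : ColMat u) : redRead (L.filter (· ≠ 0)) = redRead L := by
  simp only [redRead]
  congr; funext i
  exact redList_map_filter_ne_zero (f := (· i)) rfl L

/-- `A` arises from `C` by putting a new first row on top, whose nonzero entries read `δ`, and
inserting columns that vanish outside that row. -/
def IsExtension (δ : List ℕ) (C : ColMat u) (A : ColMat (u + 1)) : Prop :=
  (∀ c ∈ A, c ≠ 0) ∧ redList (A.map (· 0)) = δ ∧ (A.map Fin.tail).filter (· ≠ 0) = C

lemma IsExtension.cons {δ : List ℕ} {C : ColMat u} {A : ColMat (u + 1)} {x : ℕ}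
    {c : Fin u → ℕ} (h : IsExtension δ C A) (hxc : (Fin.cons x c : Fin (u + 1) → ℕ) ≠ 0) :
    IsExtension (redList [x] ++ δ) ([c].filter (· ≠ 0) ++ C) (Fin.cons x c :: A) := by
  obtain ⟨hA, rfl, rfl⟩ := h
  refine ⟨List.forall_mem_cons.2 ⟨hxc, hA⟩, ?_, ?_⟩ <;>
    simp only [List.map_cons, Fin.cons_zero, Fin.tail_cons, redList, ← List.filter_append,
      List.singleton_append]

lemma IsExtension.rowSums {δ : List ℕ} {C : ColMat u} {A : ColMat (u + 1)}
    (h : IsExtension δ C A) : rowSums A = δ.sum :: rowSums C := by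
  obtain ⟨-, rfl, rfl⟩ := h
  rw [rowSums_succ, rowSums_filter_ne_zero, sum_redList]

lemma IsExtension.redRead {δ : List ℕ} {C : ColMat u} {A : ColMat (u + 1)}
    (h : IsExtension δ C A) : redRead A = δ ++ redRead C := by
  obtain ⟨-, rfl, rfl⟩ := h
  rw [redRead_succ, redRead_filter_ne_zero]

lemma IsExtension.isReduced {δ : List ℕ} {C : ColMat u} {A : ColMat (u + 1)}
    (h : IsExtension δ C A) (hδ : δ ≠ []) (hC : IsReduced C) : IsReduced A := by
  obtain ⟨hA, rfl, rfl⟩ := h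
  refine ⟨hA, Fin.cases ?_ fun i => ?_⟩
  · obtain ⟨a, ha⟩ := List.exists_mem_of_ne_nil _ hδ
    simp only [redList, List.mem_filter, List.mem_map] at ha
    obtain ⟨⟨c, hc, rfl⟩, hc0⟩ := ha
    exact ⟨c, hc, by simpa using hc0⟩
  · obtain ⟨c, hc, hci⟩ := hC.2 i
    obtain ⟨d, hd, rfl⟩ := List.mem_map.1 (List.mem_filter.1 hc).1
    exact ⟨d, hd, hci⟩

lemma IsReduced.filter_tail {A : ColMat (u + 1)} (hA : IsReduced A) :
    IsReduced ((A.map Fin.tail).filter (· ≠ 0)) := by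
  refine ⟨fun c hc => by simpa using (List.mem_filter.1 hc).2, fun i => ?_⟩
  obtain ⟨c, hc, hci⟩ := hA.2 i.succ
  refine ⟨Fin.tail c, List.mem_filter.2 ⟨List.mem_map_of_mem hc, ?_⟩, hci⟩
  simpa using fun h : Fin.tail c = 0 => hci (congrFun h i)

/-- The matrices `A` with `IsExtension δ C A`, enumerated along the quasi-shuffle recursion:
the first column of `A` takes the first entry of `δ`, the first column of `C`, or both. -/
def extensions : List ℕ → ColMat u → Finset (ColMat (u + 1))
  | [], C => {C.map (Fin.cons 0)}
  | x :: xs, [] => {(x :: xs).map fun y => Fin.cons y 0}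
  | x :: xs, c :: cs =>
      (extensions xs (c :: cs)).image (Fin.cons x 0 :: ·) ∪
      (extensions (x :: xs) cs).image (Fin.cons 0 c :: ·) ∪
      (extensions xs cs).image (Fin.cons x c :: ·)
  termination_by δ C => δ.length + C.length

lemma extensions_nil_right (δ : List ℕ) :
    extensions δ ([] : ColMat u) = {δ.map fun y => Fin.cons y 0} := by
  cases δ <;> simp [extensions]

lemma cons_mem_extensions {δ : List ℕ} {C : ColMat u} {A : ColMat (u + 1)} {x : ℕ}
    {c : Fin u → ℕ} (hA : A ∈ extensions δ C) (hxc : (Fin.cons x c : Fin (u + 1) → ℕ) ≠ 0) :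
    Fin.cons x c :: A ∈ extensions (redList [x] ++ δ) ([c].filter (· ≠ 0) ++ C) := by
  by_cases hx : x = 0 <;> by_cases hc : c = 0
  · exact absurd (cons_eq_zero_iff.2 ⟨hx, hc⟩) hxc
  · subst hx
    cases δ with
    | nil => simp_all [extensions, redList]
    | cons y ys => simp_all [extensions, redList]
  · subst hc
    cases C with
    | nil => simp_all [extensions_nil_right, redList]
    | cons d ds => simp_all [extensions, redList]
  · cases δ <;> cases C <;> simp_all [extensions, extensions_nil_right, redList]

lemma isExtension_of_mem_extensions : ∀ {δ : List ℕ} {C : ColMat u}, IsComposition δ →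
    (∀ c ∈ C, c ≠ 0) → ∀ {A : ColMat (u + 1)}, A ∈ extensions δ C → IsExtension δ C A
  | [], C, _, hC, A, hA => by
    rw [extensions, mem_singleton] at hA
    subst hA
    refine ⟨?_, ?_, ?_⟩
    · simpa [cons_eq_zero_iff] using hC
    · simp [redList, Function.comp_def]
    · simpa [Function.comp_def] using hC
  | x :: xs, [], hδ, _, A, hA => by
    rw [extensions_nil_right, mem_singleton] at hA
    subst hA
    refine ⟨?_, ?_, ?_⟩
    · simpa [IsComposition, cons_eq_zero_iff, Nat.pos_iff_ne_zero] using hδ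
    · simpa [IsComposition, redList, Function.comp_def, Nat.pos_iff_ne_zero] using hδ
    · simp [Function.comp_def]
  | x :: xs, c :: cs, hδ, hC, A, hA => by
    obtain ⟨hx, hxs⟩ := List.forall_mem_cons.1 hδ
    obtain ⟨hc, hcs⟩ := List.forall_mem_cons.1 hC
    simp only [extensions, mem_union, mem_image] at hA
    rcases hA with (⟨B, hB, rfl⟩ | ⟨B, hB, rfl⟩) | ⟨B, hB, rfl⟩
    · simpa [redList, hx.ne'] using (isExtension_of_mem_extensions hxs hC hB).cons
        (x := x) (c := 0) (by simp [cons_eq_zero_iff, hx.ne'])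
    · simpa [redList, hc] using (isExtension_of_mem_extensions hδ hcs hB).cons
        (x := 0) (c := c) (by simp [cons_eq_zero_iff, hc])
    · simpa [redList, hx.ne', hc] using (isExtension_of_mem_extensions hxs hcs hB).cons
        (x := x) (c := c) (by simp [cons_eq_zero_iff, hx.ne'])
  termination_by δ C => δ.length + C.length

lemma mem_extensions_of_isExtension {δ : List ℕ} {C : ColMat u} {A : ColMat (u + 1)}
    (h : IsExtension δ C A) : A ∈ extensions δ C := by
  obtain ⟨hA, rfl, rfl⟩ := h
  induction A with
  | nil => simp [extensions, redList]
  | cons d A ih =>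
    obtain ⟨hd, hA⟩ := List.forall_mem_cons.1 hA
    rw [← Fin.cons_self_tail d] at hd ⊢
    simpa [redList, ← List.filter_append] using cons_mem_extensions (ih hA) hd

lemma mem_extensions_iff {δ : List ℕ} {C : ColMat u} {A : ColMat (u + 1)}
    (hδ : IsComposition δ) (hC : ∀ c ∈ C, c ≠ 0) : A ∈ extensions δ C ↔ IsExtension δ C A :=
  ⟨isExtension_of_mem_extensions hδ hC, mem_extensions_of_isExtension⟩

section QuasiShuffle

variable (k : Type*) [CommRing k]

lemma sum_image_cons_Mq (d : Fin u → ℕ) (s : Finset (ColMat u)) :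
    ∑ A ∈ s.image (d :: ·), Mq k (colSums A) =
      mapConsQ k (∑ i, d i) (∑ A ∈ s, Mq k (colSums A)) := by
  rw [sum_image fun _ _ _ _ h => (List.cons.inj h).2, map_sum]
  simp [colSums, mapConsQ_Mq]

lemma disjoint_image_cons {d e : Fin u → ℕ} (hde : d ≠ e) (s t : Finset (ColMat u)) :
    Disjoint (s.image (d :: ·)) (t.image (e :: ·)) := by
  simp only [disjoint_left, mem_image]
  rintro _ ⟨A, -, rfl⟩ ⟨B, -, h⟩
  exact hde (List.cons.inj h).1.symm

lemma qshuffle_colSums : ∀ {δ : List ℕ} {C : ColMat u}, IsComposition δ → (∀ c ∈ C, c ≠ 0) →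
    qshuffle k δ (colSums C) = ∑ A ∈ extensions δ C, Mq k (colSums A)
  | [], C, _, _ => by simp [qshuffle, extensions, colSums, Mq, Function.comp_def]
  | x :: xs, [], _, _ => by simp [qshuffle, extensions, colSums, Mq, Function.comp_def]
  | x :: xs, c :: cs, hδ, hC => by
    obtain ⟨hx, hxs⟩ := List.forall_mem_cons.1 hδ
    obtain ⟨hc, hcs⟩ := List.forall_mem_cons.1 hC
    have hcx0 : (Fin.cons x 0 : Fin (u + 1) → ℕ) ≠ Fin.cons 0 c := by simp [hx.ne']
    have hcxc : (Fin.cons x 0 : Fin (u + 1) → ℕ) ≠ Fin.cons x c := by simp [Ne.symm hc]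
    have h0xc : (Fin.cons 0 c : Fin (u + 1) → ℕ) ≠ Fin.cons x c := by simp [hx.ne]
    rw [extensions, sum_union (disjoint_union_left.2
        ⟨disjoint_image_cons hcxc _ _, disjoint_image_cons h0xc _ _⟩),
      sum_union (disjoint_image_cons hcx0 _ _), sum_image_cons_Mq, sum_image_cons_Mq,
      sum_image_cons_Mq, ← qshuffle_colSums hxs hC, ← qshuffle_colSums hδ hcs,
      ← qshuffle_colSums hxs hcs]
    simp [colSums, qshuffle, Fin.sum_cons]
  termination_by δ C => δ.length + C.length

end QuasiShuffle

/-- The reduced matrices (of any size) whose reduced reading word is `γ`: the first row reads a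
nonempty prefix `γ.take (j + 1)`, and deleting it (and the zero columns) leaves a reduced matrix
reading the rest of `γ`. -/
def withRedRead : List ℕ → Finset (Σ u, ColMat u)
  | [] => {⟨0, []⟩}
  | γ@(_ :: _) =>
      ((range γ.length).sigma fun j => (withRedRead (γ.drop (j + 1))).sigma fun q =>
        extensions (γ.take (j + 1)) q.2).image fun x => ⟨x.2.1.1 + 1, x.2.2⟩
  termination_by γ => γ.length

lemma isReduced_zero_iff {L : ColMat 0} : IsReduced L ↔ L = [] := by
  refine ⟨fun h => List.eq_nil_iff_forall_not_mem.2 fun c hc => h.1 c hc (funext fun i => i.elim0),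
    fun h => ⟨by simp [h], fun i => i.elim0⟩⟩

lemma redRead_zero (L : ColMat 0) : redRead L = [] := by
  simp [redRead]

lemma IsReduced.redList_head_ne_nil {A : ColMat (u + 1)} (hA : IsReduced A) :
    redList (A.map (· 0)) ≠ [] := by
  obtain ⟨c, hc, hc0⟩ := hA.2 0
  exact List.ne_nil_of_mem (List.mem_filter.2 ⟨List.mem_map_of_mem hc, by simpa using hc0⟩)

lemma mem_withRedRead_nil {q : Σ u, ColMat u} :
    q ∈ withRedRead [] ↔ IsReduced q.2 ∧ redRead q.2 = [] := by
  obtain ⟨_ | u, L⟩ := q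
  · simp [withRedRead, isReduced_zero_iff, redRead_zero]
  · simp only [withRedRead, mem_singleton, Sigma.mk.injEq, Nat.add_one_ne_zero, false_and,
      false_iff, not_and, redRead_succ, List.append_eq_nil_iff]
    intro hL h
    exact (hL.redList_head_ne_nil h).elim

lemma withRedRead_of_ne_nil {γ : List ℕ} (hγ : γ ≠ []) :
    withRedRead γ = ((range γ.length).sigma fun j => (withRedRead (γ.drop (j + 1))).sigma fun q =>
      extensions (γ.take (j + 1)) q.2).image fun x => ⟨x.2.1.1 + 1, x.2.2⟩ := by
  obtain ⟨g, gs, rfl⟩ := List.exists_cons_of_ne_nil hγ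
  rw [withRedRead]

lemma mem_withRedRead : ∀ {γ : List ℕ}, IsComposition γ → ∀ {q : Σ u, ColMat u},
    q ∈ withRedRead γ ↔ IsReduced q.2 ∧ redRead q.2 = γ
  | [], _, _ => mem_withRedRead_nil
  | g :: gs, hγ, q => by
    simp only [withRedRead_of_ne_nil (List.cons_ne_nil g gs), mem_image, mem_sigma, mem_range,
      Sigma.exists]
    constructor
    · rintro ⟨j, u, C, A, ⟨hj, hC, hA⟩, rfl⟩
      obtain ⟨hCred, hCread⟩ := (mem_withRedRead (hγ.drop _)).1 hC
      have hext := (mem_extensions_iff (hγ.take _) hCred.1).1 hA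
      refine ⟨hext.isReduced (by simp) hCred, ?_⟩
      rw [hext.redRead, hCread, List.take_append_drop]
    · obtain ⟨_ | u, A⟩ := q
      · simp [redRead_zero]
      rintro ⟨hA, hread⟩
      have hext : IsExtension (redList (A.map (· 0))) ((A.map Fin.tail).filter (· ≠ 0)) A :=
        ⟨hA.1, rfl, rfl⟩
      have hlen : 0 < (redList (A.map (· 0))).length :=
        List.length_pos_iff.2 hA.redList_head_ne_nil
      rw [hext.redRead] at hread
      refine ⟨(redList (A.map (· 0))).length - 1, u, (A.map Fin.tail).filter (· ≠ 0), A,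
        ⟨?_, ?_, ?_⟩, rfl⟩
      · rw [← hread, List.length_append]
        omega
      · rw [mem_withRedRead (hγ.drop _), Nat.sub_add_cancel hlen, ← hread, List.drop_left]
        exact ⟨hA.filter_tail, rfl⟩
      · rw [Nat.sub_add_cancel hlen, ← hread, List.take_left]
        exact mem_extensions_of_isExtension hext
  termination_by γ => γ.length

lemma sum_withRedRead {M : Type*} [AddCommMonoid M] {γ : List ℕ} (hγ : IsComposition γ)
    (hne : γ ≠ []) (f : (Σ u, ColMat u) → M) :
    ∑ q ∈ withRedRead γ, f q = ∑ j ∈ range γ.length, ∑ q ∈ withRedRead (γ.drop (j + 1)),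
      ∑ A ∈ extensions (γ.take (j + 1)) q.2, f ⟨q.1 + 1, A⟩ := by
  rw [withRedRead_of_ne_nil hne, sum_image, sum_sigma]
  · simp_rw [sum_sigma]
  rintro ⟨j, ⟨u, C⟩, A⟩ hx ⟨j', ⟨u', C'⟩, A'⟩ hy h
  obtain ⟨hu, hA⟩ := Sigma.mk.inj_iff.1 h
  obtain rfl : u = u' := Nat.succ_injective hu
  obtain rfl : A = A' := eq_of_heq hA
  simp only [coe_sigma, Set.mem_sigma_iff, mem_coe, mem_range] at hx hy
  obtain ⟨hj, hC, hA⟩ := hx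
  obtain ⟨hj', hC', hA'⟩ := hy
  obtain ⟨-, hrow, hcols⟩ :=
    (mem_extensions_iff (hγ.take _) ((mem_withRedRead (hγ.drop _)).1 hC).1.1).1 hA
  obtain ⟨-, hrow', hcols'⟩ :=
    (mem_extensions_iff (hγ.take _) ((mem_withRedRead (hγ.drop _)).1 hC').1.1).1 hA'
  obtain rfl : j = j' := by
    have := congrArg List.length (hrow.symm.trans hrow')
    simp only [List.length_take] at this
    omega
  obtain rfl : C = C' := hcols.symm.trans hcols'
  rfl

end ColMat

section FlippedComultiplication

variable (k : Type*) [CommRing k]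

/-- `τ (Δ_P (M_γ))`, summed over column-list matrices. -/
noncomputable def flipComulQ (γ : List ℕ) : QSymM k ⊗[k] QSymM k :=
  ∑ q ∈ ColMat.withRedRead γ, Mq k (ColMat.colSums q.2) ⊗ₜ[k] Mq k (ColMat.rowSums q.2)

lemma flipComulQ_nil : flipComulQ k [] = Mq k [] ⊗ₜ[k] Mq k [] := by
  simp [flipComulQ, ColMat.withRedRead, ColMat.colSums, ColMat.rowSums]

lemma flipComulQ_eq_sum {γ : List ℕ} (hγ : IsComposition γ) (hne : γ ≠ []) :
    flipComulQ k γ =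
      ∑ j ∈ range γ.length, mulTmulCons k (γ.take (j + 1)) (flipComulQ k (γ.drop (j + 1))) := by
  rw [flipComulQ, ColMat.sum_withRedRead hγ hne]
  refine sum_congr rfl fun j _ => ?_
  rw [flipComulQ, map_sum]
  refine sum_congr rfl fun q hq => ?_
  have hC := ((ColMat.mem_withRedRead (hγ.drop _)).1 hq).1.1
  rw [mulTmulCons, TensorProduct.map_tmul, LinearMap.comp_apply, TensorProduct.mk_apply, mulQ_Mq,
    ColMat.qshuffle_colSums k (hγ.take _) hC, mapConsQ_Mq, TensorProduct.sum_tmul]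
  refine sum_congr rfl fun A hA => ?_
  rw [((ColMat.mem_extensions_iff (hγ.take _) hC).1 hA).rowSums]

end FlippedComultiplication

theorem betaQ_eq_flipComulQ (k : Type*) [CommRing k] :
    ∀ {γ : List ℕ}, IsComposition γ → betaQ k γ = flipComulQ k γ
  | [], _ => by rw [betaQ_nil, flipComulQ_nil]
  | g :: gs, hγ => by
    rw [betaQ_eq_sum k hγ (List.cons_ne_nil g gs), flipComulQ_eq_sum k hγ (List.cons_ne_nil g gs)]
    refine sum_congr rfl fun j _ => ?_
    rw [betaQ_eq_flipComulQ k (hγ.drop _)]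
  termination_by γ => γ.length

def columnsEquiv : (Σ u v, Matrix (Fin u) (Fin v) ℕ) ≃ Σ u, ColMat u :=
  Equiv.sigmaCongrRight fun _ =>
    (Equiv.sigmaCongrRight fun _ => Equiv.piComm _).trans List.equivSigmaTuple.symm

section Columns

variable {u v : ℕ} (A : Matrix (Fin u) (Fin v) ℕ)

lemma columnsEquiv_apply : columnsEquiv ⟨u, v, A⟩ = ⟨u, List.ofFn fun j i => A i j⟩ := rfl

lemma ColMat.colSums_ofFn : ColMat.colSums (List.ofFn fun j i => A i j) = _root_.colSums A := by
  simp [ColMat.colSums, _root_.colSums, Function.comp_def]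

lemma ColMat.rowSums_ofFn : ColMat.rowSums (List.ofFn fun j i => A i j) = _root_.rowSums A := by
  simp [ColMat.rowSums, _root_.rowSums, List.sum_ofFn]

lemma ColMat.redRead_ofFn : ColMat.redRead (List.ofFn fun j i => A i j) = redList (readM A) := by
  simp [ColMat.redRead, readM, redList, List.filter_flatten, Function.comp_def]

lemma ColMat.isReduced_ofFn_iff : ColMat.IsReduced (List.ofFn fun j i => A i j) ↔ MatReduced A := by
  simp only [ColMat.IsReduced, MatReduced, List.mem_ofFn, Function.ne_iff, forall_exists_index,
    forall_apply_eq_imp_iff, exists_exists_eq_and, Pi.zero_apply]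
  exact and_comm

end Columns

lemma flipComulQ_eq_finsum (k : Type*) [CommRing k] {γ : List ℕ} (hγ : IsComposition γ) :
    flipComulQ k γ = ∑ᶠ p ∈ {p : Σ u : ℕ, Σ v : ℕ, Matrix (Fin u) (Fin v) ℕ |
        MatReduced p.2.2 ∧ redList (readM p.2.2) = γ},
      Mq k (colSums p.2.2) ⊗ₜ[k] Mq k (rowSums p.2.2) := by
  rw [flipComulQ, ← finsum_mem_coe_finset]
  refine (finsum_mem_eq_of_bijOn columnsEquiv (columnsEquiv.bijOn fun p => ?_) fun p _ => ?_).symm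
  all_goals obtain ⟨u, v, A⟩ := p
  · rw [mem_coe, ColMat.mem_withRedRead hγ, columnsEquiv_apply, ColMat.isReduced_ofFn_iff,
      ColMat.redRead_ofFn, Set.mem_ofPred_eq]
  · rw [columnsEquiv_apply, ColMat.colSums_ofFn, ColMat.rowSums_ofFn]

/-- The Bernstein homomorphism of `QSym` itself is the flipped internal comultiplication
`τ ∘ Δ_P`:  for every composition `γ`,
`∑_α ξ_α(M_γ) ⊗ M_α = ∑_{A reduced, (read A)^red = γ} M_{column A} ⊗ M_{row A}`,
the right-hand sum ranging over all reduced matrices `A` of nonnegative integers (of any size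
`u × v`) whose row-by-row reading word, after deleting zeros, equals `γ`. -/
theorem bernstein_QSym_eq_flipped_internal_comul (k : Type*) [CommRing k]
    (γ : List ℕ) (hγ : IsComposition γ) :
    ∑ᶠ α ∈ {α : List ℕ | IsComposition α}, xiQ k α (Mq k γ) ⊗ₜ[k] Mq k α =
      ∑ᶠ p ∈ {p : Σ u : ℕ, Σ v : ℕ, Matrix (Fin u) (Fin v) ℕ |
          MatReduced p.2.2 ∧ redList (readM p.2.2) = γ},
        Mq k (colSums p.2.2) ⊗ₜ[k] Mq k (rowSums p.2.2) := by
  rw [finsum_xiQ_tmul_eq_betaQ, betaQ_eq_flipComulQ k hγ, flipComulQ_eq_finsum k hγ]
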